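/- arXiv:math/0511284 — 2 statements merged into one kernel-verified Lean document; each statement's English description precedes it below -/
import Mathlib

section
/- Let T0 be a module over B[[t]] which is free of finite rank, equipped with a B-linear operator D satisfying D(t·v) = t·v + t·D(v) (i.e. D acts as t∂_t plus a B[[t]]-linear part), such that the induced endomorphism of T0/t·T0 is nilpotent. Then for every k ≥ 1 the map D : t^k·T0 → t^k·T0 is well-defined and the induced endomorphism of t^k·T0/t^{k+1}·T0 is invertible; in particular D - 0 restricted to t^k·T0/t^{k+1}·T0 is bijective. -/
/-- The operator `t∂ₜ` on `B[[t]]`. -/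
noncomputable def pTdt (B : Type*) [CommRing B] : PowerSeries B →ₗ[B] PowerSeries B where
  toFun f := PowerSeries.mk fun n => n • PowerSeries.coeff n f
  map_add' f g := by
    ext n
    simp [smul_add]
  map_smul' b f := by
    ext n
    simp only [PowerSeries.coeff_mk, map_smul, RingHom.id_apply, smul_eq_mul, nsmul_eq_mul]
    ring

/-- The submodule `t^k·T₀` of the free module `T₀ = B[[t]]^r`. -/
noncomputable def latticePow (B : Type*) [CommRing B] (r k : ℕ) :
    Submodule (PowerSeries B) (Fin r → PowerSeries B) :=
  (Ideal.span {(PowerSeries.X : PowerSeries B)}) ^ k • ⊤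

/-!
Multiplication by `t^k` induces a `B`-linear surjection `T₀ → t^k T₀ / t^{k+1} T₀` that
kills `t T₀`, and the Leibniz rule `D (t^k u) = k t^k u + t^k D u` shows that it intertwines
`D` on `T₀` with `D - k` on the graded piece. Hence `D - k` is nilpotent there, so
`D = k + (D - k)` is invertible, `k` being a unit in the `ℚ`-algebra `B`.
-/

open PowerSeries

lemma isUnit_of_isNilpotent_sub {R : Type*} [Ring R] {a u : R} (hu : IsUnit u)
    (hau : Commute a u) (h : IsNilpotent (a - u)) : IsUnit a := by
  simpa using h.isUnit_add_left_of_commute hu (hau.sub_left (Commute.refl u))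

lemma Module.End.isUnit_natCast {R M : Type*} [CommRing R] [Algebra ℚ R] [AddCommGroup M]
    [Module R M] {n : ℕ} (hn : n ≠ 0) : IsUnit (n : Module.End R M) := by
  have hq : IsUnit (n : ℚ) := isUnit_iff_ne_zero.mpr (Nat.cast_ne_zero.mpr hn)
  simpa only [map_natCast] using hq.map ((algebraMap R (Module.End R M)).comp (algebraMap ℚ R))

lemma Module.End.pow_eq_zero_of_comp_surjective {R M N : Type*} [CommRing R] [AddCommGroup M]
    [Module R M] [AddCommGroup N] [Module R N] {f : Module.End R N} {g : Module.End R M}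
    {q : M →ₗ[R] N} (hq : Function.Surjective q) (h : f ∘ₗ q = q ∘ₗ g) {m : ℕ}
    (hm : q ∘ₗ g ^ m = 0) : f ^ m = 0 :=
  (LinearMap.cancel_right hq).mp <| by
    rw [Module.End.commute_pow_left_of_commute h, hm, LinearMap.zero_comp]

section Lattice

variable {B : Type*} [CommRing B] {r : ℕ}

lemma mem_latticePow_iff {k : ℕ} {v : Fin r → PowerSeries B} :
    v ∈ latticePow B r k ↔ ∃ w, v = (X : PowerSeries B) ^ k • w := by
  rw [latticePow, Ideal.span_singleton_pow, Submodule.ideal_span_singleton_smul,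
    Submodule.mem_smul_pointwise_iff_exists]
  simp only [Submodule.mem_top, true_and, eq_comm]

lemma X_pow_smul_mem_latticePow (k : ℕ) (w : Fin r → PowerSeries B) :
    (X : PowerSeries B) ^ k • w ∈ latticePow B r k :=
  mem_latticePow_iff.mpr ⟨w, rfl⟩

lemma pTdt_X_pow (k : ℕ) : pTdt B ((X : PowerSeries B) ^ k) = k • (X : PowerSeries B) ^ k := by
  ext n
  simp only [pTdt, LinearMap.coe_mk, AddHom.coe_mk, coeff_mk, map_nsmul, coeff_X_pow]
  split_ifs with h <;> simp [h]

variable {D : (Fin r → PowerSeries B) →ₗ[B] (Fin r → PowerSeries B)}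

lemma map_X_pow_smul
    (hLeib : ∀ (f : PowerSeries B) v, D (f • v) = pTdt B f • v + f • D v)
    (k : ℕ) (u : Fin r → PowerSeries B) :
    D ((X : PowerSeries B) ^ k • u) =
      k • (X : PowerSeries B) ^ k • u + (X : PowerSeries B) ^ k • D u := by
  rw [hLeib, pTdt_X_pow, smul_assoc]

lemma map_mem_latticePow
    (hLeib : ∀ (f : PowerSeries B) v, D (f • v) = pTdt B f • v + f • D v)
    {k : ℕ} {v : Fin r → PowerSeries B} (hv : v ∈ latticePow B r k) :
    D v ∈ latticePow B r k := by
  obtain ⟨w, rfl⟩ := mem_latticePow_iff.mp hv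
  rw [map_X_pow_smul hLeib]
  exact add_mem (nsmul_mem (X_pow_smul_mem_latticePow k w) k)
    (X_pow_smul_mem_latticePow k (D w))

end Lattice

section Graded

variable (B : Type*) [CommRing B] (r k : ℕ)

abbrev gradedPiece : Type _ :=
  (latticePow B r k).restrictScalars B ⧸
    ((latticePow B r (k + 1)).restrictScalars B).comap
      ((latticePow B r k).restrictScalars B).subtype

noncomputable def gradedMk : (Fin r → PowerSeries B) →ₗ[B] gradedPiece B r k :=
  Submodule.mkQ _ ∘ₗ LinearMap.codRestrict ((latticePow B r k).restrictScalars B)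
    (DistribSMul.toLinearMap B _ ((X : PowerSeries B) ^ k)) (X_pow_smul_mem_latticePow k)

variable {B r k}

lemma gradedMk_surjective : Function.Surjective (gradedMk B r k) := by
  intro x
  obtain ⟨⟨v, hv⟩, rfl⟩ := Submodule.mkQ_surjective _ x
  obtain ⟨w, rfl⟩ := mem_latticePow_iff.mp hv
  exact ⟨w, rfl⟩

lemma gradedMk_eq_zero {v : Fin r → PowerSeries B} (hv : v ∈ latticePow B r 1) :
    gradedMk B r k v = 0 := by
  obtain ⟨w, rfl⟩ := mem_latticePow_iff.mp hv
  refine (Submodule.Quotient.mk_eq_zero _).mpr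
    (?_ : (X : PowerSeries B) ^ k • X ^ 1 • w ∈ latticePow B r (k + 1))
  rw [smul_smul, ← pow_add]
  exact X_pow_smul_mem_latticePow _ w

lemma mapQ_sub_natCast_comp_gradedMk
    {D : (Fin r → PowerSeries B) →ₗ[B] (Fin r → PowerSeries B)}
    (hLeib : ∀ (f : PowerSeries B) v, D (f • v) = pTdt B f • v + f • D v)
    (h1 : ∀ v ∈ (latticePow B r k).restrictScalars B,
      D v ∈ (latticePow B r k).restrictScalars B)
    (h3 : ((latticePow B r (k + 1)).restrictScalars B).comap
        ((latticePow B r k).restrictScalars B).subtype ≤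
      (((latticePow B r (k + 1)).restrictScalars B).comap
        ((latticePow B r k).restrictScalars B).subtype).comap (D.restrict h1)) :
    (Submodule.mapQ _ _ (D.restrict h1) h3 - (k : Module.End B (gradedPiece B r k))) ∘ₗ
      gradedMk B r k = gradedMk B r k ∘ₗ D := by
  refine LinearMap.ext fun u => ?_
  rw [LinearMap.comp_apply, LinearMap.sub_apply, Module.End.natCast_apply, sub_eq_iff_eq_add,
    LinearMap.comp_apply, ← map_nsmul, ← map_add]
  refine congrArg (Submodule.mkQ _) (Subtype.ext ?_)
  show D ((X : PowerSeries B) ^ k • u) = (X : PowerSeries B) ^ k • (D u + k • u)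
  rw [map_X_pow_smul hLeib, smul_add, smul_comm _ k, add_comm]

end Graded

/-- Let `T₀` be a free module of finite rank over `B[[t]]` (`B` a
commutative `ℚ`-algebra), equipped with a `B`-linear operator `D` satisfying
`D(f·v) = (t∂ₜf)·v + f·D(v)` (in particular `D(t·v) = t·v + t·D(v)`), whose induced
endomorphism of `T₀/t·T₀` is nilpotent.  Then for every `k ≥ 1` the operator `D` maps
`t^k·T₀` to itself, it also maps `t^{k+1}·T₀` to itself, and the induced endomorphism of
`t^k·T₀ / t^{k+1}·T₀` is invertible (bijective). -/
theorem tdt_on_graded_pieces_bijective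
    (B : Type*) [CommRing B] [Algebra ℚ B] (r : ℕ)
    (D : (Fin r → PowerSeries B) →ₗ[B] (Fin r → PowerSeries B))
    (hLeib : ∀ (f : PowerSeries B) (v : Fin r → PowerSeries B),
      D (f • v) = (pTdt B f) • v + f • D v)
    (hnil : ∃ m : ℕ, ∀ v : Fin r → PowerSeries B,
      ((D ^ m : Module.End B (Fin r → PowerSeries B)) v) ∈ latticePow B r 1)
    (k : ℕ) (hk : 1 ≤ k) :
    ∃ h1 : ∀ v ∈ (latticePow B r k).restrictScalars B,
        D v ∈ (latticePow B r k).restrictScalars B,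
      ∃ h3 : ((latticePow B r (k + 1)).restrictScalars B).comap
            ((latticePow B r k).restrictScalars B).subtype ≤
          (((latticePow B r (k + 1)).restrictScalars B).comap
            ((latticePow B r k).restrictScalars B).subtype).comap (D.restrict h1),
      Function.Bijective (Submodule.mapQ _ _ (D.restrict h1) h3) := by
  obtain ⟨m, hm⟩ := hnil
  refine ⟨fun v hv => map_mem_latticePow hLeib hv, fun v hv => map_mem_latticePow hLeib hv, ?_⟩
  rw [← Module.End.isUnit_iff]
  exact isUnit_of_isNilpotent_sub (Module.End.isUnit_natCast (by omega))
    (Nat.cast_commute k _).symm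
    ⟨m, Module.End.pow_eq_zero_of_comp_surjective gradedMk_surjective
      (mapQ_sub_natCast_comp_gradedMk hLeib _ _)
      (LinearMap.ext fun v => gradedMk_eq_zero (hm v))⟩
end

section
/- Let C be a symmetric monoidal category, M an object of a module category over C, and suppose for each object V of C we are given a morphism s_V : F(V) ⊗ M → V ⋆ M (where F is a monoidal functor and ⋆ the module action), compatible with tensor products in the sense that the three natural composites agree (associativity of s with respect to V ⊗ W). If C is rigid (every object V has a dual V* with evaluation and coevaluation), then each s_V is an isomorphism. -/
/-!
A monoidal functor carries an exact pairing `(V, V*)` to an exact pairing `(F V, F V*)`, and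
monoidality of `s` says that `s_V ⊗ s_{V*}` matches the two coevaluations while `s_{V*} ⊗ s_V`
matches the two evaluations. Whenever `f : X ⟶ Y` and `g : X' ⟶ Y'` relate exact pairings in this
way, `(X ◁ ev_Y) ∘ (X ◁ g ▷ Y) ∘ (coev_X ▷ Y)` is a two-sided inverse of `f`: each composite
collapses to a zigzag identity.
-/

namespace CategoryTheory

open MonoidalCategory Functor.LaxMonoidal Functor.OplaxMonoidal Functor.Monoidal

variable {C E : Type*} [Category C] [Category E] [MonoidalCategory C] [MonoidalCategory E]

namespace Functor.Monoidal

variable (F : C ⥤ E) [F.Monoidal] (X Y : C) [ExactPairing X Y]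

theorem map_evaluation_coevaluation :
    (ε F ≫ F.map (η_ X Y) ≫ δ F X Y) ▷ F.obj X ≫ (α_ _ _ _).hom ≫
      F.obj X ◁ (μ F Y X ≫ F.map (ε_ X Y) ≫ η F) = (λ_ _).hom ≫ (ρ_ _).inv := by
  -- `F` applied to the zigzag identity is the goal conjugated by the structure isomorphisms.
  have h := congrArg F.map (ExactPairing.evaluation_coevaluation X Y)
  simp only [Functor.map_comp, map_whiskerRight, map_whiskerLeft, map_associator,
    map_leftUnitor, map_rightUnitor_inv, Category.assoc, μ_δ_assoc, cancel_epi] at h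
  simp only [← Category.assoc, cancel_mono] at h
  simp only [Category.assoc] at h
  simp only [comp_whiskerRight, MonoidalCategory.whiskerLeft_comp, Category.assoc]
  rw [reassoc_of% h]
  simp

theorem map_coevaluation_evaluation :
    F.obj Y ◁ (ε F ≫ F.map (η_ X Y) ≫ δ F X Y) ≫ (α_ _ _ _).inv ≫
      (μ F Y X ≫ F.map (ε_ X Y) ≫ η F) ▷ F.obj Y = (ρ_ _).hom ≫ (λ_ _).inv := by
  have h := congrArg F.map (ExactPairing.coevaluation_evaluation X Y)
  simp only [Functor.map_comp, map_whiskerRight, map_whiskerLeft, map_associator_inv,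
    map_leftUnitor_inv, map_rightUnitor, Category.assoc, μ_δ_assoc, cancel_epi] at h
  simp only [← Category.assoc, cancel_mono] at h
  simp only [Category.assoc] at h
  simp only [comp_whiskerRight, MonoidalCategory.whiskerLeft_comp, Category.assoc]
  rw [reassoc_of% h]
  simp

end Functor.Monoidal

abbrev ExactPairing.map (F : C ⥤ E) [F.Monoidal] (X Y : C) [ExactPairing X Y] :
    ExactPairing (F.obj X) (F.obj Y) where
  coevaluation' := ε F ≫ F.map (η_ X Y) ≫ δ F X Y
  evaluation' := μ F Y X ≫ F.map (ε_ X Y) ≫ η F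
  evaluation_coevaluation' := map_evaluation_coevaluation F X Y
  coevaluation_evaluation' := map_coevaluation_evaluation F X Y

theorem isIso_of_preserves_coevaluation_evaluation {X X' Y Y' : E} [ExactPairing X X']
    [ExactPairing Y Y'] (f : X ⟶ Y) (g : X' ⟶ Y') (hη : η_ X X' ≫ (f ⊗ₘ g) = η_ Y Y')
    (hε : (g ⊗ₘ f) ≫ ε_ Y Y' = ε_ X X') : IsIso f := by
  refine ⟨(λ_ Y).inv ≫ η_ X X' ▷ Y ≫ (α_ _ _ _).hom ≫ X ◁ (g ▷ Y ≫ ε_ Y Y') ≫ (ρ_ X).hom,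
    ?_, ?_⟩
  · rw [leftUnitor_inv_naturality_assoc, whisker_exchange_assoc,
      associator_naturality_right_assoc, ← whiskerLeft_comp_assoc, whisker_exchange_assoc,
      ← MonoidalCategory.tensorHom_def_assoc, hε]
    simp
  · simp only [Category.assoc]
    rw [← rightUnitor_naturality, whisker_exchange_assoc, ← associator_naturality_left_assoc, whiskerLeft_comp_assoc,
      ← associator_naturality_middle_assoc, ← comp_whiskerRight_assoc,
      ← comp_whiskerRight_assoc, Category.assoc, ← MonoidalCategory.tensorHom_def, hη]
    simp

namespace NatTrans.IsMonoidal

variable {F G : C ⥤ E} [F.Monoidal] [G.Monoidal] (s : F ⟶ G) [NatTrans.IsMonoidal s]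

theorem app_unit_comp_η : s.app (𝟙_ C) ≫ η G = η F := by
  rw [← cancel_epi (ε F), unit_assoc, ε_η, ε_η]

theorem app_tensor_comp_δ (X Y : C) :
    s.app (X ⊗ Y) ≫ δ G X Y = δ F X Y ≫ (s.app X ⊗ₘ s.app Y) := by
  rw [← cancel_epi (μ F X Y), tensor_assoc, μ_δ, Category.comp_id, μ_δ_assoc]

theorem coevaluation_comp_tensorHom (X Y : C) [ExactPairing X Y] :
    (ε F ≫ F.map (η_ X Y) ≫ δ F X Y) ≫ (s.app X ⊗ₘ s.app Y) = ε G ≫ G.map (η_ X Y) ≫ δ G X Y := by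
  rw [Category.assoc, Category.assoc, ← app_tensor_comp_δ, s.naturality_assoc, unit_assoc]

theorem tensorHom_comp_evaluation (X Y : C) [ExactPairing X Y] :
    (s.app Y ⊗ₘ s.app X) ≫ μ G Y X ≫ G.map (ε_ X Y) ≫ η G = μ F Y X ≫ F.map (ε_ X Y) ≫ η F := by
  rw [← tensor_assoc, ← s.naturality_assoc, app_unit_comp_η]

theorem isIso_app_of_exactPairing (X Y : C) [ExactPairing X Y] : IsIso (s.app X) :=
  letI := ExactPairing.map F X Y
  letI := ExactPairing.map G X Y
  isIso_of_preserves_coevaluation_evaluation (s.app X) (s.app Y)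
    (coevaluation_comp_tensorHom s X Y) (tensorHom_comp_evaluation s X Y)

end NatTrans.IsMonoidal

end CategoryTheory

open CategoryTheory

attribute [local instance] CategoryTheory.endofunctorMonoidalCategory

/-- Let `C` be a rigid (symmetric) monoidal category acting on a category
`D` (an action of `C` on `D` is a monoidal functor from `C` to the monoidal category of
endofunctors of `D`).  Suppose `F, G : C ⥤ (D ⥤ D)` are two such actions (e.g.
`V ↦ F(V) ⊗ (−)` and `V ↦ V ⋆ (−)`), and `s : F ⟶ G` is a natural transformation
compatible with the monoidal structures (so that the composites built from `s_V`, `s_W`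
and `s_{V⊗W}` agree).  Then each component `s_V` (evaluated at any object `M` of `D`)
is an isomorphism. -/
theorem monoidal_nat_trans_from_rigid_is_iso
    {C D : Type*} [Category C] [Category D]
    [MonoidalCategory C] [RigidCategory C]
    (F G : C ⥤ (D ⥤ D)) [F.Monoidal] [G.Monoidal]
    (s : F ⟶ G) [NatTrans.IsMonoidal s]
    (V : C) (M : D) :
    IsIso ((s.app V).app M) := by
  have := NatTrans.IsMonoidal.isIso_app_of_exactPairing s V Vᘁ
  infer_instance
end
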